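/- arXiv:1708.05809 — 3 statements merged into one kernel-verified Lean document; each statement's English description precedes it below -/
import Mathlib

section
/- Let G be a connected non-bipartite signed graph on n vertices and a ∈ ℤ^n. Then a lies in the subgroup of ℤ^n generated by {ρ(e) : e ∈ E(G)} if and only if Σ_{i=1}^n a_i is even. -/
/-!
Every `ρ(e) = ±(e_i + e_j)` has even coordinate sum, which gives one inclusion. Conversely,
walks in `G` put `e_i + e_j` or `e_i - e_j` into `ℤρ(E(G))` according to their parity. If
`2 e_w` were missing, the vertices `v` with `e_w + e_v ∈ ℤρ(E(G))` and the others would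
bipartition `G`; so every `2 e_v`, and hence every `e_u - e_v`, lies in `ℤρ(E(G))`, and these
generate the vectors of even coordinate sum.
-/

open scoped BigOperators

namespace EdgeRing

/-- A signed edge on vertex set `Fin n`: endpoints `e.1`, `e.2.1` and sign `e.2.2`. -/
abbrev SEdge (n : ℕ) := Fin n × Fin n × ℤ

/-- A signed graph on `n` vertices: a set of signed edges (loops allowed, `e.1 = e.2.1`). -/
structure SGraph (n : ℕ) where
  E : Set (SEdge n)
  sgn_unit : ∀ e ∈ E, e.2.2 = 1 ∨ e.2.2 = -1

variable {n : ℕ}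

/-- `ρ(±ij) = ±(e_i + e_j)` (a loop at `i` gives `±2 e_i`), integer version. -/
def rhoZ (e : SEdge n) : Fin n → ℤ :=
  fun v => e.2.2 * ((if e.1 = v then 1 else 0) + (if e.2.1 = v then 1 else 0))

/-- real version of `rhoZ`. -/
def rhoR (e : SEdge n) : Fin n → ℝ := fun v => (rhoZ e v : ℝ)

def toR (a : Fin n → ℤ) : Fin n → ℝ := fun v => (a v : ℝ)

def SGraph.rhoZSet (G : SGraph n) : Set (Fin n → ℤ) := {x | ∃ e ∈ G.E, x = rhoZ e}

def SGraph.rhoRSet (G : SGraph n) : Set (Fin n → ℝ) := {x | ∃ e ∈ G.E, x = rhoR e}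

/-- `ℤρ(E(G))`: the subgroup of `ℤ^n` generated by the edge vectors. -/
def SGraph.lattice (G : SGraph n) : AddSubgroup (Fin n → ℤ) :=
  AddSubgroup.closure G.rhoZSet

/-- `ℤ₊ρ(E(G))`: the affine semigroup generated by the edge vectors. -/
def SGraph.sgp (G : SGraph n) : AddSubmonoid (Fin n → ℤ) :=
  AddSubmonoid.closure G.rhoZSet

/-- adjacency via an edge of `G` (symmetric by definition). -/
def SGraph.adj (G : SGraph n) (i j : Fin n) : Prop :=
  ∃ e ∈ G.E, (e.1 = i ∧ e.2.1 = j) ∨ (e.1 = j ∧ e.2.1 = i)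

/-- `G` is connected: any two vertices are joined by a walk. -/
def SGraph.Connected (G : SGraph n) : Prop :=
  ∀ i j : Fin n, Relation.ReflTransGen G.adj i j

/-- the vertex set of the connected component of `v`. -/
def SGraph.compSet (G : SGraph n) (v : Fin n) : Set (Fin n) :=
  {w | Relation.ReflTransGen G.adj v w}

/-- `C` is (the vertex set of) a component of `G`. -/
def SGraph.IsComp (G : SGraph n) (C : Set (Fin n)) : Prop :=
  ∃ v, C = G.compSet v

/-- the edge `e` is incident to the vertex set `S`. -/
def incident (e : SEdge n) (S : Set (Fin n)) : Prop := e.1 ∈ S ∨ e.2.1 ∈ S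

/-- the vertex set `C` is partitioned as `L ∪ R` and every edge of `G` incident to `C`
has one endpoint in `L` and one in `R`. -/
def SGraph.BipWith (G : SGraph n) (C L R : Set (Fin n)) : Prop :=
  C = L ∪ R ∧ Disjoint L R ∧
    ∀ e ∈ G.E, incident e C → ((e.1 ∈ L ∧ e.2.1 ∈ R) ∨ (e.1 ∈ R ∧ e.2.1 ∈ L))

/-- the vertex set `C` (e.g. a component) is bipartite in `G`. -/
def SGraph.BipOn (G : SGraph n) (C : Set (Fin n)) : Prop := ∃ L R, G.BipWith C L R

/-- `L ∪ R` is a bipartition of (all of) `G`. -/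
def SGraph.IsBipartition (G : SGraph n) (L R : Set (Fin n)) : Prop :=
  G.BipWith Set.univ L R

def SGraph.Bipartite (G : SGraph n) : Prop := ∃ L R, G.IsBipartition L R

/-- `comp G`: the number of connected components of `G`. -/
noncomputable def SGraph.comp (G : SGraph n) : ℕ := Nat.card {C : Set (Fin n) // G.IsComp C}

/-- `bicomp G`: the number of bipartite connected components of `G`. -/
noncomputable def SGraph.bicomp (G : SGraph n) : ℕ :=
  Nat.card {C : Set (Fin n) // G.IsComp C ∧ G.BipOn C}

/-- the dual vector `e_L^* - e_R^*` as an element of `ℝ^n`. -/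
noncomputable def dvec (L R : Set (Fin n)) : Fin n → ℝ :=
  fun v => Set.indicator L (fun _ => (1 : ℝ)) v - Set.indicator R (fun _ => (1 : ℝ)) v

/-- `L, R` witness the facet-subgraph condition for the bipartite component `C` of `H`:
`C = L ∪ R` is a bipartition, and every edge of `G` not in `H` is a positive edge
incident to `L` but not `R`, or a negative edge incident to `R` but not `L`. -/
def FacetWitness (G H : SGraph n) (C L R : Set (Fin n)) : Prop :=
  H.BipWith C L R ∧
    ∀ e ∈ G.E \ H.E,
      (e.2.2 = 1 ∧ incident e L ∧ ¬ incident e R) ∨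
      (e.2.2 = -1 ∧ incident e R ∧ ¬ incident e L)

/-- `H` is a facet subgraph of `G`. -/
def IsFacetSubgraph (G H : SGraph n) : Prop :=
  H.E ⊆ G.E ∧ H.bicomp = G.bicomp + 1 ∧
    ∀ C, H.IsComp C → H.BipOn C → ¬ G.IsComp C → ∃ L R, FacetWitness G H C L R

/-- the cone generated by `S`: all nonnegative real combinations. -/
def coneOf (S : Set (Fin n → ℝ)) : Set (Fin n → ℝ) :=
  {x | ∃ (t : Finset (Fin n → ℝ)) (c : (Fin n → ℝ) → ℝ),
    ↑t ⊆ S ∧ (∀ y, 0 ≤ c y) ∧ x = ∑ y ∈ t, c y • y}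

/-- the dimension of a subset of `ℝ^n`: dimension of its linear span. -/
noncomputable def sdim (S : Set (Fin n → ℝ)) : ℕ := Module.finrank ℝ (Submodule.span ℝ S)

/-- `F` is a face of the cone `C`, cut out by a supporting linear form. -/
def IsFaceOf (C F : Set (Fin n → ℝ)) : Prop :=
  ∃ σ : (Fin n → ℝ) →ₗ[ℝ] ℝ, (∀ x ∈ C, 0 ≤ σ x) ∧ F = C ∩ {x | σ x = 0}

/-- `F` is a facet of the cone `C`: a proper face of dimension `dim C - 1`. -/
def IsFacetOf (C F : Set (Fin n → ℝ)) : Prop :=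
  IsFaceOf C F ∧ F ≠ C ∧ sdim F + 1 = sdim C

/-- the subgraph of `G` consisting of the edges inside the vertex set `C`. -/
def SGraph.restrict (G : SGraph n) (C : Set (Fin n)) : SGraph n :=
  ⟨{e ∈ G.E | e.1 ∈ C}, fun e he => G.sgn_unit e he.1⟩

/-- Vitulli's criterion for Serre's `R₁` condition for the edge ring `k[G]`
(taken here as the definition of `R₁`). -/
def SerreR1 (G : SGraph n) : Prop :=
  ∀ F, IsFacetOf (coneOf G.rhoRSet) F →
    ∃ σ : (Fin n → ℝ) →ₗ[ℝ] ℝ,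
      (∀ x ∈ coneOf G.rhoRSet, 0 ≤ σ x) ∧
      F = coneOf G.rhoRSet ∩ {x | σ x = 0} ∧
      (∀ a ∈ G.lattice, ∃ z : ℤ, σ (toR a) = z) ∧
      (∃ a ∈ G.sgp, σ (toR a) = 1) ∧
      ((AddSubgroup.closure {a : Fin n → ℤ | a ∈ G.sgp ∧ toR a ∈ F} : AddSubgroup (Fin n → ℤ)) :
          Set (Fin n → ℤ)) = {a : Fin n → ℤ | a ∈ G.lattice ∧ σ (toR a) = 0}

/-! ### Mixed signed, directed graphs -/

/-- A mixed signed, directed graph: signed edges `SE` (loops allowed) and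
directed edges `DE` (no directed loops). -/
structure MGraph (n : ℕ) where
  SE : Set (SEdge n)
  DE : Set (Fin n × Fin n)
  sgn_unit : ∀ e ∈ SE, e.2.2 = 1 ∨ e.2.2 = -1
  no_dloop : ∀ e ∈ DE, e.1 ≠ e.2

/-- `ρ((i,j)) = e_j - e_i` for a directed edge. -/
def rhoD (e : Fin n × Fin n) : Fin n → ℤ :=
  fun v => (if e.2 = v then 1 else 0) - (if e.1 = v then 1 else 0)

def MGraph.rhoZSet (G : MGraph n) : Set (Fin n → ℤ) :=
  {x | ∃ e ∈ G.SE, x = rhoZ e} ∪ {x | ∃ e ∈ G.DE, x = rhoD e}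

def MGraph.rhoRSet (G : MGraph n) : Set (Fin n → ℝ) :=
  {x | ∃ a ∈ G.rhoZSet, x = toR a}

/-- `ℤρ(E(G))` for a mixed signed, directed graph. -/
def MGraph.lattice (G : MGraph n) : AddSubgroup (Fin n → ℤ) :=
  AddSubgroup.closure G.rhoZSet

def MGraph.adj (G : MGraph n) (i j : Fin n) : Prop :=
  (∃ e ∈ G.SE, (e.1 = i ∧ e.2.1 = j) ∨ (e.1 = j ∧ e.2.1 = i)) ∨
  (∃ e ∈ G.DE, (e.1 = i ∧ e.2 = j) ∨ (e.1 = j ∧ e.2 = i))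

def MGraph.Connected (G : MGraph n) : Prop :=
  ∀ i j : Fin n, Relation.ReflTransGen G.adj i j

def MGraph.compSet (G : MGraph n) (v : Fin n) : Set (Fin n) :=
  {w | Relation.ReflTransGen G.adj v w}

def MGraph.IsComp (G : MGraph n) (C : Set (Fin n)) : Prop :=
  ∃ v, C = G.compSet v

noncomputable def MGraph.comp (G : MGraph n) : ℕ := Nat.card {C : Set (Fin n) // G.IsComp C}

/-- the directed edge `e` is incident to the vertex set `S`. -/
def dincident (e : Fin n × Fin n) (S : Set (Fin n)) : Prop := e.1 ∈ S ∨ e.2 ∈ S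

/-- Bipartiteness of the augmented signed graph of `G` on the vertex set `C`,
expressed on `G` itself: `C = L ∪ R`, every signed edge incident to `C` crosses
between `L` and `R`, and every directed edge incident to `C` has both endpoints
in the same part (its artificial vertex lies on the other side). -/
def MGraph.BipWith (G : MGraph n) (C L R : Set (Fin n)) : Prop :=
  C = L ∪ R ∧ Disjoint L R ∧
    (∀ e ∈ G.SE, incident e C → ((e.1 ∈ L ∧ e.2.1 ∈ R) ∨ (e.1 ∈ R ∧ e.2.1 ∈ L))) ∧
    (∀ e ∈ G.DE, dincident e C → ((e.1 ∈ L ∧ e.2 ∈ L) ∨ (e.1 ∈ R ∧ e.2 ∈ R)))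

def MGraph.BipOn (G : MGraph n) (C : Set (Fin n)) : Prop := ∃ L R, G.BipWith C L R

def MGraph.IsBipartition (G : MGraph n) (L R : Set (Fin n)) : Prop :=
  G.BipWith Set.univ L R

def MGraph.Bipartite (G : MGraph n) : Prop := ∃ L R, G.IsBipartition L R

/-- number of components of `G` whose augmentation is bipartite. -/
noncomputable def MGraph.bicomp (G : MGraph n) : ℕ :=
  Nat.card {C : Set (Fin n) // G.IsComp C ∧ G.BipOn C}

/-- facet-subgraph witness for mixed signed, directed graphs. -/
def MFacetWitness (G H : MGraph n) (C L R : Set (Fin n)) : Prop :=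
  H.BipWith C L R ∧
    (∀ e ∈ G.SE \ H.SE,
      (e.2.2 = 1 ∧ incident e L ∧ ¬ incident e R) ∨
      (e.2.2 = -1 ∧ incident e R ∧ ¬ incident e L)) ∧
    (∀ e ∈ G.DE \ H.DE, (e.2 ∈ L ∧ e.1 ∉ L) ∨ (e.1 ∈ R ∧ e.2 ∉ R))

/-- `H` is a facet subgraph of the mixed signed, directed graph `G`. -/
def IsMFacetSubgraph (G H : MGraph n) : Prop :=
  H.SE ⊆ G.SE ∧ H.DE ⊆ G.DE ∧ H.bicomp = G.bicomp + 1 ∧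
    ∀ C, H.IsComp C → H.BipOn C → ¬ G.IsComp C → ∃ L R, MFacetWitness G H C L R

lemma rhoZ_eq_smul (e : SEdge n) :
    rhoZ e = e.2.2 • (Pi.single e.1 1 + Pi.single e.2.1 1) := by
  funext v
  simp [rhoZ, Pi.single_apply, eq_comm]

lemma sum_rhoZ (e : SEdge n) : ∑ v, rhoZ e v = 2 * e.2.2 := by
  simp only [rhoZ_eq_smul, Pi.smul_apply, Pi.add_apply, smul_eq_mul, ← Finset.mul_sum,
    Finset.sum_add_distrib, Finset.sum_pi_single', Finset.mem_univ, if_true]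
  ring

def evenSum (n : ℕ) : AddSubgroup (Fin n → ℤ) where
  carrier := {a | (2 : ℤ) ∣ ∑ i, a i}
  add_mem' {a b} ha hb := by
    simpa only [Set.mem_ofPred_eq, Pi.add_apply, Finset.sum_add_distrib] using dvd_add ha hb
  zero_mem' := by simp
  neg_mem' {a} ha := by
    simpa only [Set.mem_ofPred_eq, Pi.neg_apply, Finset.sum_neg_distrib, dvd_neg] using ha

lemma mem_evenSum {a : Fin n → ℤ} : a ∈ evenSum n ↔ (2 : ℤ) ∣ ∑ i, a i := Iff.rfl

lemma eq_sum_smul_single_sub_add (a : Fin n → ℤ) (w : Fin n) :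
    a = ∑ v, a v • (Pi.single v 1 - Pi.single w 1) + (∑ v, a v) • Pi.single w 1 := by
  simp only [smul_sub, Finset.sum_sub_distrib]
  rw [← Finset.sum_smul, sub_add_cancel]
  simp only [← Pi.single_smul, smul_eq_mul, mul_one, Finset.univ_sum_single]

namespace SGraph

variable {G : SGraph n}

lemma lattice_le_evenSum (G : SGraph n) : G.lattice ≤ evenSum n := by
  refine (AddSubgroup.closure_le _).mpr ?_
  rintro _ ⟨e, -, rfl⟩
  exact ⟨e.2.2, sum_rhoZ e⟩

lemma single_add_single_mem_lattice {e : SEdge n} (he : e ∈ G.E) :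
    Pi.single e.1 1 + Pi.single e.2.1 1 ∈ G.lattice := by
  have hρ : rhoZ e ∈ G.lattice := AddSubgroup.subset_closure ⟨e, he, rfl⟩
  rcases G.sgn_unit e he with hs | hs
  · simpa [rhoZ_eq_smul, hs] using hρ
  · convert G.lattice.neg_mem hρ using 1
    simp [rhoZ_eq_smul, hs, add_comm]

lemma single_add_single_mem_lattice_of_adj {i j : Fin n} (h : G.adj i j) :
    Pi.single i 1 + Pi.single j 1 ∈ G.lattice := by
  obtain ⟨e, he, ⟨rfl, rfl⟩ | ⟨rfl, rfl⟩⟩ := h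
  · exact single_add_single_mem_lattice he
  · rw [add_comm]
    exact single_add_single_mem_lattice he

/-- The sign is `+` for walks of odd length and `-` for walks of even length. -/
lemma single_add_or_sub_mem_lattice {i j : Fin n} (h : Relation.ReflTransGen G.adj i j) :
    Pi.single i 1 + Pi.single j 1 ∈ G.lattice ∨ Pi.single i 1 - Pi.single j 1 ∈ G.lattice := by
  induction h with
  | refl => simp
  | @tail j k _ hjk ih =>
    have hjk := single_add_single_mem_lattice_of_adj hjk
    rcases ih with hadd | hsub
    · right
      convert G.lattice.sub_mem hadd hjk using 1
      abel
    · left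
      convert G.lattice.add_mem hsub hjk using 1
      abel

/-- The classes `{v | e_w + e_v ∈ ℤρ(E(G))}` and its complement form a bipartition: an edge
inside the first class would give `2 e_w`, and an edge leaving the second one lands in the first. -/
lemma bipartite_of_two_smul_single_not_mem_lattice (hconn : G.Connected) {w : Fin n}
    (hw : (2 : ℤ) • Pi.single w 1 ∉ G.lattice) : G.Bipartite := by
  set L := {v | Pi.single w 1 + Pi.single v 1 ∈ G.lattice}
  refine ⟨L, Lᶜ, (Set.union_compl_self L).symm, disjoint_compl_right, fun e he _ => ?_⟩
  have hedge := single_add_single_mem_lattice he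
  by_cases h₁ : e.1 ∈ L
  · refine .inl ⟨h₁, fun h₂ => hw ?_⟩
    convert G.lattice.sub_mem (G.lattice.add_mem h₁ h₂) hedge using 1
    rw [two_smul]
    abel
  · refine .inr ⟨h₁, ?_⟩
    have hsub := (single_add_or_sub_mem_lattice (hconn w e.1)).resolve_left h₁
    show Pi.single w 1 + Pi.single e.2.1 1 ∈ G.lattice
    convert G.lattice.add_mem hsub hedge using 1
    abel

lemma two_smul_single_mem_lattice (hconn : G.Connected) (hnb : ¬ G.Bipartite) (v : Fin n) :
    (2 : ℤ) • Pi.single v 1 ∈ G.lattice := by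
  by_contra h
  exact hnb (bipartite_of_two_smul_single_not_mem_lattice hconn h)

lemma single_sub_single_mem_lattice (hconn : G.Connected) (hnb : ¬ G.Bipartite) (u v : Fin n) :
    Pi.single u 1 - Pi.single v 1 ∈ G.lattice := by
  have h2v := two_smul_single_mem_lattice hconn hnb v
  rcases single_add_or_sub_mem_lattice (hconn u v) with hadd | hsub
  · convert G.lattice.sub_mem hadd h2v using 1
    rw [two_smul]
    abel
  · exact hsub

lemma evenSum_le_lattice (hconn : G.Connected) (hnb : ¬ G.Bipartite) : evenSum n ≤ G.lattice := by
  intro a ha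
  rcases isEmpty_or_nonempty (Fin n) with _ | ⟨⟨w⟩⟩
  · rw [Subsingleton.elim a 0]
    exact G.lattice.zero_mem
  obtain ⟨k, hk⟩ := mem_evenSum.mp ha
  rw [eq_sum_smul_single_sub_add a w, hk, mul_comm, mul_smul]
  exact add_mem (sum_mem fun v _ => zsmul_mem (single_sub_single_mem_lattice hconn hnb v w) _)
    (zsmul_mem (two_smul_single_mem_lattice hconn hnb w) k)

lemma lattice_eq_evenSum (hconn : G.Connected) (hnb : ¬ G.Bipartite) : G.lattice = evenSum n :=
  le_antisymm G.lattice_le_evenSum (evenSum_le_lattice hconn hnb)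

end SGraph

/-- for a connected non-bipartite signed graph, `a ∈ ℤρ(E(G))` iff the
coordinate sum of `a` is even. -/
theorem stmt3 {n : ℕ} (G : SGraph n) (hconn : G.Connected) (hnb : ¬ G.Bipartite)
    (a : Fin n → ℤ) :
    a ∈ G.lattice ↔ (2 : ℤ) ∣ ∑ i, a i := by
  rw [G.lattice_eq_evenSum hconn hnb, mem_evenSum]

end EdgeRing
end

section
/- Let G be a signed graph with bipartite components G_1, ..., G_k having bipartitions L_1 ∪ R_1, ..., L_k ∪ R_k. If v* ∈ (ℝ^n)* satisfies ⟨v*, ρ(e)⟩ = 0 for every edge e of G, then v* is a real linear combination of the dual vectors e_{L_1}* − e_{R_1}*, ..., e_{L_k}* − e_{R_k}*. -/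
open scoped BigOperators

namespace EdgeRing

variable {n : ℕ}

/-!
Orthogonality to `ρ(e)` says `v i + v j = 0` for every edge `ij`, so `v` changes sign along each
step of a walk. On a bipartite component `L ∪ R` the product `v · (e_L* - e_R*)` is therefore
constant, i.e. `v` is a multiple of `e_L* - e_R*` there. On a component where `v` does not vanish
identically, the sign of `v` relative to a fixed vertex is a bipartition, so `v` vanishes on
every non-bipartite component.
-/

lemma dvec_of_mem_left {L R : Set (Fin n)} (hLR : Disjoint L R) {w : Fin n}
    (hw : w ∈ L) : dvec L R w = 1 := by
  simp [dvec, hw, Set.disjoint_left.mp hLR hw]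

lemma dvec_of_mem_right {L R : Set (Fin n)} (hLR : Disjoint L R) {w : Fin n}
    (hw : w ∈ R) : dvec L R w = -1 := by
  simp [dvec, hw, Set.disjoint_right.mp hLR hw]

namespace SGraph

variable {G : SGraph n}

instance (G : SGraph n) : Std.Symm G.adj := ⟨fun _ _ ⟨e, he, h⟩ => ⟨e, he, h.symm⟩⟩

lemma mem_compSet_self (b : Fin n) : b ∈ G.compSet b := Relation.ReflTransGen.refl

lemma compSet_eq_of_mem {b w : Fin n} (h : w ∈ G.compSet b) : G.compSet w = G.compSet b := by
  ext u
  exact ⟨h.trans, (Std.Symm.symm _ _ h).trans⟩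

lemma IsComp.eq_of_mem {C D : Set (Fin n)} (hC : G.IsComp C) (hD : G.IsComp D) {w : Fin n}
    (hwC : w ∈ C) (hwD : w ∈ D) : C = D := by
  obtain ⟨b, rfl⟩ := hC
  obtain ⟨b', rfl⟩ := hD
  rw [← compSet_eq_of_mem hwC, compSet_eq_of_mem hwD]

lemma BipWith.mem_of_mem_left {C L R : Set (Fin n)} (h : G.BipWith C L R) {w : Fin n}
    (hw : w ∈ L) : w ∈ C := h.1 ▸ Or.inl hw

lemma BipWith.mem_of_mem_right {C L R : Set (Fin n)} (h : G.BipWith C L R) {w : Fin n}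
    (hw : w ∈ R) : w ∈ C := h.1 ▸ Or.inr hw

lemma BipWith.dvec_eq_zero {C L R : Set (Fin n)} (h : G.BipWith C L R) {w : Fin n}
    (hw : w ∉ C) : dvec L R w = 0 := by
  simp [dvec, Set.indicator_of_notMem (mt h.mem_of_mem_left hw),
    Set.indicator_of_notMem (mt h.mem_of_mem_right hw)]

lemma BipWith.dvec_mul_self {C L R : Set (Fin n)} (h : G.BipWith C L R) {w : Fin n}
    (hw : w ∈ C) : dvec L R w * dvec L R w = 1 := by
  rw [h.1] at hw
  rcases hw with hL | hR
  · rw [dvec_of_mem_left h.2.1 hL, mul_one]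
  · rw [dvec_of_mem_right h.2.1 hR, neg_mul_neg, mul_one]

lemma BipWith.dvec_adj {C L R : Set (Fin n)} (h : G.BipWith C L R) {u w : Fin n}
    (hu : u ∈ C) (huw : G.adj u w) : dvec L R w = -dvec L R u := by
  obtain ⟨e, he, hends⟩ := huw
  have hinc : incident e C := by
    rcases hends with ⟨rfl, -⟩ | ⟨-, rfl⟩
    exacts [Or.inl hu, Or.inr hu]
  rcases h.2.2 e he hinc with ⟨h1, h2⟩ | ⟨h1, h2⟩ <;>
    rcases hends with ⟨rfl, rfl⟩ | ⟨rfl, rfl⟩ <;>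
    simp only [dvec_of_mem_left h.2.1, dvec_of_mem_right h.2.1, h1, h2, neg_neg]

end SGraph

lemma sum_mul_rhoR (v : Fin n → ℝ) (e : SEdge n) :
    ∑ i, v i * rhoR e i = e.2.2 * (v e.1 + v e.2.1) := by
  simp only [rhoR, rhoZ]
  push_cast
  simp only [mul_add, mul_ite, mul_one, mul_zero, Finset.sum_add_distrib, Finset.sum_ite_eq,
    Finset.mem_univ, if_true]
  ring

section Vanishing

variable {G : SGraph n} {v : Fin n → ℝ} (hv : ∀ e ∈ G.E, ∑ i, v i * rhoR e i = 0)
include hv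

lemma eq_neg_of_adj {u w : Fin n} (huw : G.adj u w) : v w = -v u := by
  obtain ⟨e, he, hends⟩ := huw
  have hsum := hv e he
  rw [sum_mul_rhoR] at hsum
  have hsgn : (e.2.2 : ℝ) ≠ 0 := by rcases G.sgn_unit e he with h | h <;> simp [h]
  have := (mul_eq_zero.mp hsum).resolve_left hsgn
  rcases hends with ⟨rfl, rfl⟩ | ⟨rfl, rfl⟩ <;> linarith

lemma eq_or_eq_neg_of_mem_compSet {b w : Fin n} (hw : w ∈ G.compSet b) :
    v w = v b ∨ v w = -v b := by
  induction hw with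
  | refl => exact Or.inl rfl
  | tail _ hadj ih =>
    rw [eq_neg_of_adj hv hadj]
    rcases ih with h | h <;> simp [h]

lemma mul_dvec_eq_of_mem_compSet {b w : Fin n} {L R : Set (Fin n)}
    (hbip : G.BipWith (G.compSet b) L R) (hw : w ∈ G.compSet b) :
    v w * dvec L R w = v b * dvec L R b := by
  induction hw with
  | refl => rfl
  | @tail u x hu hux ih =>
    rw [eq_neg_of_adj hv hux, hbip.dvec_adj hu hux, neg_mul_neg, ih]

lemma bipOn_compSet_of_ne_zero {w : Fin n} (hw : v w ≠ 0) : G.BipOn (G.compSet w) := by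
  refine ⟨{u ∈ G.compSet w | v u = v w}, {u ∈ G.compSet w | v u = -v w}, ?_, ?_, ?_⟩
  · ext u
    constructor
    · intro hu
      exact (eq_or_eq_neg_of_mem_compSet hv hu).imp (⟨hu, ·⟩) (⟨hu, ·⟩)
    · rintro (⟨hu, -⟩ | ⟨hu, -⟩) <;> exact hu
  · refine Set.disjoint_left.mpr fun u ⟨_, h1⟩ ⟨_, h2⟩ => hw ?_
    linarith
  · intro e he hinc
    have hadj : G.adj e.1 e.2.1 := ⟨e, he, Or.inl ⟨rfl, rfl⟩⟩
    have hmem : e.1 ∈ G.compSet w ∧ e.2.1 ∈ G.compSet w := by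
      rcases hinc with h | h
      · exact ⟨h, h.tail hadj⟩
      · exact ⟨h.tail (Std.Symm.symm _ _ hadj), h⟩
    have hval := eq_neg_of_adj hv hadj
    rcases eq_or_eq_neg_of_mem_compSet hv hmem.1 with h | h
    · exact Or.inl ⟨⟨hmem.1, h⟩, hmem.2, by rw [hval, h]⟩
    · exact Or.inr ⟨⟨hmem.1, h⟩, hmem.2, by rw [hval, h, neg_neg]⟩

end Vanishing

/-- a linear form vanishing on all edge vectors is a linear combination
of the dual vectors `e_{L_t}^* - e_{R_t}^*` of the bipartite components. -/
theorem stmt7 {n : ℕ} (G : SGraph n) (k : ℕ) (C L R : Fin k → Set (Fin n))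
    (hcomp : ∀ t, G.IsComp (C t)) (hbip : ∀ t, G.BipWith (C t) (L t) (R t))
    (hinj : Function.Injective C)
    (hall : ∀ D, G.IsComp D → G.BipOn D → ∃ t, D = C t)
    (v : Fin n → ℝ) (hv : ∀ e ∈ G.E, ∑ i, v i * rhoR e i = 0) :
    ∃ c : Fin k → ℝ, v = ∑ t, c t • dvec (L t) (R t) := by
  choose b hb using id hcomp
  refine ⟨fun t => v (b t) * dvec (L t) (R t) (b t), funext fun w => ?_⟩
  simp only [Finset.sum_apply, Pi.smul_apply, smul_eq_mul]
  by_cases hw : ∃ t, w ∈ C t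
  · obtain ⟨t, hwt⟩ := hw
    rw [Finset.sum_eq_single t]
    · calc v w = v w * dvec (L t) (R t) w * dvec (L t) (R t) w := by
            rw [mul_assoc, (hbip t).dvec_mul_self hwt, mul_one]
        _ = v (b t) * dvec (L t) (R t) (b t) * dvec (L t) (R t) w := by
            rw [mul_dvec_eq_of_mem_compSet hv (hb t ▸ hbip t) (hb t ▸ hwt)]
    · intro t' _ ht'
      have hwt' : w ∉ C t' := fun h => ht' (hinj ((hcomp t').eq_of_mem (hcomp t) h hwt))
      rw [(hbip t').dvec_eq_zero hwt', mul_zero]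
    · simp
  · simp only [not_exists] at hw
    have hv0 : v w = 0 := by
      by_contra hne
      obtain ⟨t, ht⟩ := hall _ ⟨w, rfl⟩ (bipOn_compSet_of_ne_zero hv hne)
      exact hw t (ht ▸ SGraph.mem_compSet_self w)
    rw [hv0, Finset.sum_eq_zero fun t _ => by rw [(hbip t).dvec_eq_zero (hw t), mul_zero]]

end EdgeRing
end

section
/- Let G be a mixed signed, directed graph on n vertices. Then dim cone(P_G) = n − bicomp(G), where bicomp(G) is the number of components H of G whose augmentations H̃ are bipartite. -/
/-! By rank–nullity, `dim span ρ(E(G)) = n - dim W`, where `W` is the space of `y ∈ ℝⁿ`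
orthogonal to all edge vectors: `y i + y j = 0` along signed edges and `y i = y j` along
directed edges. Along any walk `y` can only change sign, so `|y|` is constant on components;
if `y ≠ 0` on a component, sorting its vertices by the sign of `y` bipartitions its
augmentation, and conversely a bipartition `L ∪ R` of a component gives `e_L - e_R ∈ W`.
Hence `y ↦ (y at a base point of each bipartite component)` is an isomorphism
`W ≃ ℝ^{bicomp G}`. -/

open scoped BigOperators

namespace EdgeRing

variable {n : ℕ}

open Module Submodule

theorem finrank_span_add_finrank_eq_card {K ι : Type*} [Field K] [Fintype ι] [DecidableEq ι]
    {S : Set (ι → K)} {W : Submodule K (ι → K)} (hW : ∀ y, y ∈ W ↔ ∀ x ∈ S, y ⬝ᵥ x = 0) :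
    finrank K (span K S) + finrank K W = Fintype.card ι := by
  have hW' : W = (span K S).dualAnnihilator.comap (dotProductEquiv K ι).toLinearMap := by
    ext y
    rw [hW, mem_comap, mem_dualAnnihilator]
    exact ⟨fun h x hx => span_le (p := LinearMap.ker (dotProductEquiv K ι y)).mpr h hx,
      fun h x hx => h x (subset_span hx)⟩
  rw [hW', comap_equiv_eq_map_symm, LinearEquiv.finrank_map_eq,
    Subspace.finrank_add_finrank_dualAnnihilator_eq, finrank_fintype_fun_eq_card]

lemma dotProduct_toR_rhoZ (y : Fin n → ℝ) (e : SEdge n) :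
    y ⬝ᵥ toR (rhoZ e) = e.2.2 * (y e.1 + y e.2.1) := by
  simp [dotProduct, toR, rhoZ, mul_add, Finset.sum_add_distrib]
  ring

lemma dotProduct_toR_rhoD (y : Fin n → ℝ) (e : Fin n × Fin n) :
    y ⬝ᵥ toR (rhoD e) = y e.2 - y e.1 := by
  simp [dotProduct, toR, rhoD, mul_sub, Finset.sum_sub_distrib]

section dvec

variable {L R : Set (Fin n)} {w : Fin n}

lemma dvec_apply_of_mem_left (hLR : Disjoint L R) (hw : w ∈ L) : dvec L R w = 1 := by
  simp [dvec, hw, Set.disjoint_left.mp hLR hw]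

lemma dvec_apply_of_mem_right (hLR : Disjoint L R) (hw : w ∈ R) : dvec L R w = -1 := by
  simp [dvec, hw, Set.disjoint_right.mp hLR hw]

lemma dvec_apply_of_notMem (hL : w ∉ L) (hR : w ∉ R) : dvec L R w = 0 := by
  simp [dvec, hL, hR]

end dvec

namespace MGraph

def annihilator (G : MGraph n) : Submodule ℝ (Fin n → ℝ) where
  carrier := {y | (∀ e ∈ G.SE, y e.1 + y e.2.1 = 0) ∧ ∀ e ∈ G.DE, y e.2 = y e.1}
  add_mem' := by
    rintro y z ⟨hyS, hyD⟩ ⟨hzS, hzD⟩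
    refine ⟨fun e he => ?_, fun e he => ?_⟩
    · simp only [Pi.add_apply]; linarith [hyS e he, hzS e he]
    · simp only [Pi.add_apply, hyD e he, hzD e he]
  zero_mem' := ⟨fun _ _ => by simp, fun _ _ => rfl⟩
  smul_mem' := by
    rintro a y ⟨hyS, hyD⟩
    refine ⟨fun e he => ?_, fun e he => ?_⟩
    · simp only [Pi.smul_apply, smul_eq_mul, ← mul_add, hyS e he, mul_zero]
    · simp only [Pi.smul_apply, hyD e he]

variable {G : MGraph n}

lemma mem_annihilator_iff {y : Fin n → ℝ} :
    y ∈ G.annihilator ↔ ∀ x ∈ G.rhoRSet, y ⬝ᵥ x = 0 := by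
  constructor
  · rintro ⟨hS, hD⟩ x ⟨a, ⟨e, he, rfl⟩ | ⟨e, he, rfl⟩, rfl⟩
    · rw [dotProduct_toR_rhoZ, hS e he, mul_zero]
    · rw [dotProduct_toR_rhoD, hD e he, sub_self]
  · intro h
    refine ⟨fun e he => ?_, fun e he => ?_⟩
    · have h0 := h _ ⟨_, Or.inl ⟨e, he, rfl⟩, rfl⟩
      rw [dotProduct_toR_rhoZ] at h0
      refine (mul_eq_zero.mp h0).resolve_left ?_
      rcases G.sgn_unit e he with hs | hs <;> simp [hs]
    · have h0 := h _ ⟨_, Or.inr ⟨e, he, rfl⟩, rfl⟩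
      rwa [dotProduct_toR_rhoD, sub_eq_zero] at h0

lemma adj_symm {i j : Fin n} : G.adj i j → G.adj j i := by
  rintro (⟨e, he, h | h⟩ | ⟨e, he, h | h⟩)
  · exact Or.inl ⟨e, he, Or.inr h⟩
  · exact Or.inl ⟨e, he, Or.inl h⟩
  · exact Or.inr ⟨e, he, Or.inr h⟩
  · exact Or.inr ⟨e, he, Or.inl h⟩

lemma adj_of_mem_SE {e : SEdge n} (he : e ∈ G.SE) : G.adj e.1 e.2.1 :=
  Or.inl ⟨e, he, Or.inl ⟨rfl, rfl⟩⟩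

lemma adj_of_mem_DE {e : Fin n × Fin n} (he : e ∈ G.DE) : G.adj e.1 e.2 :=
  Or.inr ⟨e, he, Or.inl ⟨rfl, rfl⟩⟩

lemma mem_compSet_self (v : Fin n) : v ∈ G.compSet v :=
  Relation.ReflTransGen.refl

lemma compSet_eq_of_mem {v w : Fin n} (h : w ∈ G.compSet v) : G.compSet w = G.compSet v := by
  have : Std.Symm G.adj := ⟨fun _ _ => adj_symm⟩
  ext u
  exact ⟨fun hu => h.trans hu, fun hu => (Std.Symm.symm _ _ h).trans hu⟩

lemma mem_compSet_iff_of_adj {a b v : Fin n} (h : G.adj a b) :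
    a ∈ G.compSet v ↔ b ∈ G.compSet v :=
  ⟨fun ha => ha.tail h, fun hb => hb.tail (adj_symm h)⟩

lemma eq_or_eq_neg_of_adj {y : Fin n → ℝ} (hy : y ∈ G.annihilator) {a b : Fin n}
    (h : G.adj a b) : y b = y a ∨ y b = -y a := by
  rcases h with ⟨e, he, ⟨rfl, rfl⟩ | ⟨rfl, rfl⟩⟩ | ⟨e, he, ⟨rfl, rfl⟩ | ⟨rfl, rfl⟩⟩
  · exact Or.inr (by linarith [hy.1 e he])
  · exact Or.inr (by linarith [hy.1 e he])
  · exact Or.inl (hy.2 e he)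
  · exact Or.inl (hy.2 e he).symm

lemma eq_or_eq_neg_of_mem_compSet {y : Fin n → ℝ} (hy : y ∈ G.annihilator) {v w : Fin n}
    (hw : w ∈ G.compSet v) : y w = y v ∨ y w = -y v := by
  induction hw with
  | refl => exact Or.inl rfl
  | tail _ hab ih =>
    rcases ih with ih | ih <;> rcases eq_or_eq_neg_of_adj hy hab with h | h <;>
      rw [h, ih] <;> simp

/-- Sorting the component of `v` by the sign of `y` bipartitions it. -/
lemma bipOn_compSet_of_ne_zero {y : Fin n → ℝ} (hy : y ∈ G.annihilator) {v : Fin n}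
    (hv : y v ≠ 0) : G.BipOn (G.compSet v) := by
  set C := G.compSet v
  refine ⟨{w | w ∈ C ∧ y w = y v}, {w | w ∈ C ∧ y w = -y v}, ?_, ?_, ?_, ?_⟩
  · ext w
    refine ⟨fun hw => ?_, by rintro (⟨hw, _⟩ | ⟨hw, _⟩) <;> exact hw⟩
    rcases eq_or_eq_neg_of_mem_compSet hy hw with h | h
    · exact Or.inl ⟨hw, h⟩
    · exact Or.inr ⟨hw, h⟩
  · rw [Set.disjoint_left]
    rintro w ⟨_, h1⟩ ⟨_, h2⟩
    exact hv (by linarith)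
  · intro e he hinc
    have h1 : e.1 ∈ C := hinc.elim id (mem_compSet_iff_of_adj (adj_of_mem_SE he)).mpr
    have h2 : e.2.1 ∈ C := (mem_compSet_iff_of_adj (adj_of_mem_SE he)).mp h1
    have hsum := hy.1 e he
    rcases eq_or_eq_neg_of_mem_compSet hy h1 with h | h
    · exact Or.inl ⟨⟨h1, h⟩, h2, by linarith⟩
    · exact Or.inr ⟨⟨h1, h⟩, h2, by linarith⟩
  · intro e he hinc
    have h1 : e.1 ∈ C := hinc.elim id (mem_compSet_iff_of_adj (adj_of_mem_DE he)).mpr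
    have h2 : e.2 ∈ C := (mem_compSet_iff_of_adj (adj_of_mem_DE he)).mp h1
    rcases eq_or_eq_neg_of_mem_compSet hy h1 with h | h
    · exact Or.inl ⟨⟨h1, h⟩, h2, (hy.2 e he).trans h⟩
    · exact Or.inr ⟨⟨h1, h⟩, h2, (hy.2 e he).trans h⟩

lemma dvec_mem_annihilator {C L R : Set (Fin n)} (h : G.BipWith C L R) :
    dvec L R ∈ G.annihilator := by
  obtain ⟨hC, hLR, hS, hD⟩ := h
  have hout : ∀ w, w ∉ C → dvec L R w = 0 := fun w hw =>
    dvec_apply_of_notMem (fun h => hw (hC ▸ Or.inl h)) (fun h => hw (hC ▸ Or.inr h))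
  refine ⟨fun e he => ?_, fun e he => ?_⟩
  · by_cases hinc : incident e C
    · rcases hS e he hinc with ⟨h1, h2⟩ | ⟨h1, h2⟩
      · rw [dvec_apply_of_mem_left hLR h1, dvec_apply_of_mem_right hLR h2]; norm_num
      · rw [dvec_apply_of_mem_right hLR h1, dvec_apply_of_mem_left hLR h2]; norm_num
    · rw [hout _ fun h => hinc (Or.inl h), hout _ fun h => hinc (Or.inr h), add_zero]
  · by_cases hinc : dincident e C
    · rcases hD e he hinc with ⟨h1, h2⟩ | ⟨h1, h2⟩
      · rw [dvec_apply_of_mem_left hLR h1, dvec_apply_of_mem_left hLR h2]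
      · rw [dvec_apply_of_mem_right hLR h1, dvec_apply_of_mem_right hLR h2]
    · rw [hout _ fun h => hinc (Or.inl h), hout _ fun h => hinc (Or.inr h)]

lemma BipWith.symm {C L R : Set (Fin n)} (h : G.BipWith C L R) : G.BipWith C R L := by
  obtain ⟨hC, hLR, hS, hD⟩ := h
  exact ⟨hC.trans (Set.union_comm L R), hLR.symm,
    fun e he hi => (hS e he hi).symm, fun e he hi => (hD e he hi).symm⟩

lemma BipOn.exists_bipWith_mem_left {C : Set (Fin n)} (h : G.BipOn C) {v : Fin n}
    (hv : v ∈ C) : ∃ L R, G.BipWith C L R ∧ v ∈ L := by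
  obtain ⟨L, R, hLR⟩ := h
  rcases hLR.1 ▸ hv with hL | hR
  · exact ⟨L, R, hLR, hL⟩
  · exact ⟨R, L, hLR.symm, hR⟩

abbrev BipComp (G : MGraph n) : Type := {C : Set (Fin n) // G.IsComp C ∧ G.BipOn C}

noncomputable instance (G : MGraph n) : Fintype G.BipComp := Fintype.ofFinite _

lemma eq_zero_of_apply_basePoint_eq_zero {b : G.BipComp → Fin n}
    (hb : ∀ D, D.1 = G.compSet (b D)) {y : Fin n → ℝ} (hy : y ∈ G.annihilator)
    (h0 : ∀ D, y (b D) = 0) : y = 0 := by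
  funext v
  by_cases h : G.BipOn (G.compSet v)
  · let D : G.BipComp := ⟨G.compSet v, ⟨v, rfl⟩, h⟩
    have hv : v ∈ G.compSet (b D) := hb D ▸ G.mem_compSet_self v
    rcases eq_or_eq_neg_of_mem_compSet hy hv with h1 | h1 <;> simp [h1, h0 D]
  · by_contra hv
    exact h (bipOn_compSet_of_ne_zero hy hv)

lemma sum_smul_dvec_apply_basePoint {b : G.BipComp → Fin n}
    (hb : ∀ D, D.1 = G.compSet (b D)) {L R : G.BipComp → Set (Fin n)}
    (hLR : ∀ D, G.BipWith D.1 (L D) (R D)) (hbL : ∀ D, b D ∈ L D) (c : G.BipComp → ℝ)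
    (D : G.BipComp) : (∑ D', c D' • dvec (L D') (R D')) (b D) = c D := by
  rw [Finset.sum_apply, Finset.sum_eq_single D]
  · simp [dvec_apply_of_mem_left (hLR D).2.1 (hbL D)]
  · intro D' _ hne
    have hnot : b D ∉ L D' ∪ R D' := by
      rw [← (hLR D').1]
      intro hmem
      refine hne (Subtype.ext ?_)
      rw [hb D'] at hmem ⊢
      rw [hb D, G.compSet_eq_of_mem hmem]
    rw [Set.mem_union, not_or] at hnot
    simp [dvec_apply_of_notMem hnot.1 hnot.2]
  · simp

theorem finrank_annihilator : finrank ℝ G.annihilator = G.bicomp := by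
  have hbase : ∀ D : G.BipComp, ∃ v L R, D.1 = G.compSet v ∧ G.BipWith D.1 L R ∧ v ∈ L := by
    rintro ⟨C, ⟨v, rfl⟩, hbip⟩
    obtain ⟨L, R, hLR, hv⟩ := hbip.exists_bipWith_mem_left (G.mem_compSet_self v)
    exact ⟨v, L, R, rfl, hLR, hv⟩
  choose b L R hb hLR hbL using hbase
  let ev : G.annihilator →ₗ[ℝ] (G.BipComp → ℝ) :=
    LinearMap.pi (fun D => LinearMap.proj (b D)) ∘ₗ G.annihilator.subtype
  have hinj : Function.Injective ev := by
    rw [injective_iff_map_eq_zero]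
    intro y hy
    exact Subtype.ext (eq_zero_of_apply_basePoint_eq_zero hb y.2 (congrFun hy))
  have hsurj : Function.Surjective ev := by
    intro c
    refine ⟨⟨∑ D, c D • dvec (L D) (R D), G.annihilator.sum_mem fun D _ =>
      G.annihilator.smul_mem (c D) (dvec_mem_annihilator (hLR D))⟩, ?_⟩
    funext D
    exact sum_smul_dvec_apply_basePoint hb hLR hbL c D
  rw [(LinearEquiv.ofBijective ev ⟨hinj, hsurj⟩).finrank_eq, finrank_fintype_fun_eq_card,
    bicomp, Nat.card_eq_fintype_card]

end MGraph

/-- for a mixed signed, directed graph,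
`dim cone(P_G) = n - bicomp(G)`. -/
theorem stmt18 {n : ℕ} (G : MGraph n) :
    Module.finrank ℝ (Submodule.span ℝ G.rhoRSet) = n - G.bicomp := by
  have h := finrank_span_add_finrank_eq_card fun _ => G.mem_annihilator_iff
  rw [G.finrank_annihilator, Fintype.card_fin] at h
  omega

end EdgeRing
end
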